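/- arXiv:2011.07633 — 2 statements merged into one kernel-verified Lean document; each statement's English description precedes it below -/
import Mathlib

section
/- Let S be a finite set and let ρ_u, ρ_v : S → ℝ≥0 be probability mass functions of random variables U and V. Let F : S → {0,1} be a (deterministic) function. Fix μ > 0 and let Z₁ = {s ∈ S : ρ_u(s) > μ·ρ_v(s)}, Z₂ = {s ∈ S : ρ_u(s) = μ·ρ_v(s)}, and let Z = Z₁ ∪ Z₃ for some Z₃ ⊆ Z₂. If Pr(F(U)=1) ≥ Pr(U ∈ Z), then Pr(F(V)=1) ≥ Pr(V ∈ Z). -/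
open scoped Classical

/-! The test `Z` maximises `∑ (ρu - μ ρv)` over all tests, since the summand is nonnegative on `Z`
and nonpositive off it. Hence any test `A` with at least the `ρu`-mass of `Z` satisfies
`μ (∑_A ρv - ∑_Z ρv) ≥ ∑_A ρu - ∑_Z ρu ≥ 0`. -/

namespace Finset

theorem sum_le_sum_of_nonneg_of_nonpos_compl {ι M : Type*} [DecidableEq ι] [AddCommMonoid M]
    [PartialOrder M] [IsOrderedAddMonoid M] {g : ι → M} {Z : Finset ι}
    (hZ : ∀ s ∈ Z, 0 ≤ g s) (hZc : ∀ s ∉ Z, g s ≤ 0) (A : Finset ι) :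
    ∑ s ∈ A, g s ≤ ∑ s ∈ Z, g s :=
  calc ∑ s ∈ A, g s = ∑ s ∈ A ∩ Z, g s + ∑ s ∈ A \ Z, g s := (sum_inter_add_sum_sdiff A Z g).symm
    _ ≤ ∑ s ∈ A ∩ Z, g s + 0 :=
      add_le_add_right (sum_nonpos fun s hs => hZc s (mem_sdiff.mp hs).2) _
    _ ≤ ∑ s ∈ Z, g s := by
      rw [add_zero]
      exact sum_le_sum_of_subset_of_nonneg inter_subset_right fun s hs _ => hZ s hs

theorem sum_le_sum_of_likelihoodRatio_test {ι : Type*} [DecidableEq ι] {ρu ρv : ι → ℝ}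
    {μ : ℝ} (hμ : 0 < μ) {Z A : Finset ι}
    (hZ : ∀ s ∈ Z, μ * ρv s ≤ ρu s) (hZc : ∀ s ∉ Z, ρu s ≤ μ * ρv s)
    (hA : ∑ s ∈ Z, ρu s ≤ ∑ s ∈ A, ρu s) :
    ∑ s ∈ Z, ρv s ≤ ∑ s ∈ A, ρv s := by
  have hmax : ∑ s ∈ A, (ρu s - μ * ρv s) ≤ ∑ s ∈ Z, (ρu s - μ * ρv s) :=
    sum_le_sum_of_nonneg_of_nonpos_compl (fun s hs => sub_nonneg.mpr (hZ s hs))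
      (fun s hs => sub_nonpos.mpr (hZc s hs)) A
  simp only [sum_sub_distrib, ← mul_sum] at hmax
  exact le_of_mul_le_mul_left (by linarith) hμ

end Finset

theorem stmt_0_general {S : Type*} [Fintype S] (ρu ρv : S → ℝ)
    (F : S → Bool) (μ : ℝ) (hμ : 0 < μ)
    (Z₃ : Finset S)
    (hZ₃ : Z₃ ⊆ Finset.univ.filter (fun s => ρu s = μ * ρv s))
    (Z : Finset S)
    (hZ : Z = Finset.univ.filter (fun s => ρu s > μ * ρv s) ∪ Z₃)
    (h : ∑ s ∈ Z, ρu s ≤ ∑ s ∈ Finset.univ.filter (fun s => F s = true), ρu s) :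
    ∑ s ∈ Z, ρv s ≤ ∑ s ∈ Finset.univ.filter (fun s => F s = true), ρv s := by
  refine Finset.sum_le_sum_of_likelihoodRatio_test hμ (fun s hs => ?_) (fun s hs => ?_) h
  · rcases Finset.mem_union.mp (hZ ▸ hs) with hs | hs
    · exact (Finset.mem_filter.mp hs).2.le
    · exact (Finset.mem_filter.mp (hZ₃ hs)).2.ge
  · simp only [hZ, Finset.mem_union, Finset.mem_filter, Finset.mem_univ, true_and, not_or, not_lt] at hs
    exact hs.1

/-- Discrete Neyman–Pearson lemma, first direction. -/
theorem stmt_0 {S : Type*} [Fintype S] (ρu ρv : S → ℝ)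
    (hu0 : ∀ s, 0 ≤ ρu s) (hv0 : ∀ s, 0 ≤ ρv s)
    (hu1 : ∑ s, ρu s = 1) (hv1 : ∑ s, ρv s = 1)
    (F : S → Bool) (μ : ℝ) (hμ : 0 < μ)
    (Z₃ : Finset S)
    (hZ₃ : Z₃ ⊆ Finset.univ.filter (fun s => ρu s = μ * ρv s))
    (Z : Finset S)
    (hZ : Z = Finset.univ.filter (fun s => ρu s > μ * ρv s) ∪ Z₃)
    (h : ∑ s ∈ Z, ρu s ≤ ∑ s ∈ Finset.univ.filter (fun s => F s = true), ρu s) :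
    ∑ s ∈ Z, ρv s ≤ ∑ s ∈ Finset.univ.filter (fun s => F s = true), ρv s :=
  stmt_0_general ρu ρv F μ hμ Z₃ hZ₃ Z hZ h
end

section
/- Let S be a finite set and let ρ_u, ρ_v : S → ℝ≥0 be probability mass functions. Let F : S → {0,1}. Fix μ > 0 and let Z₁ = {s ∈ S : ρ_u(s) < μ·ρ_v(s)}, Z₂ = {s ∈ S : ρ_u(s) = μ·ρ_v(s)}, and Z = Z₁ ∪ Z₃ for some Z₃ ⊆ Z₂. If Pr(F(U)=1) ≤ Pr(U ∈ Z), then Pr(F(V)=1) ≤ Pr(V ∈ Z). -/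
open scoped Classical

open Finset

/-- The exchange inequality behind the Neyman–Pearson lemma: only the points of `A \ Z` and
`Z \ A` contribute to either difference, and there the likelihood-ratio bounds compare them. -/
theorem mul_sum_sub_sum_le_sum_sub_sum {ι R : Type*} [DecidableEq ι] [Ring R] [PartialOrder R]
    [IsOrderedAddMonoid R] {f g : ι → R} {c : R} {A Z : Finset ι}
    (hZ : ∀ i ∈ Z, f i ≤ c * g i) (hA : ∀ i ∈ A, i ∉ Z → c * g i ≤ f i) :
    c * (∑ i ∈ A, g i - ∑ i ∈ Z, g i) ≤ ∑ i ∈ A, f i - ∑ i ∈ Z, f i := by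
  calc c * (∑ i ∈ A, g i - ∑ i ∈ Z, g i)
      = ∑ i ∈ A \ Z, c * g i - ∑ i ∈ Z \ A, c * g i := by
        rw [← sum_sdiff_sub_sum_sdiff, mul_sub, mul_sum, mul_sum]
    _ ≤ ∑ i ∈ A \ Z, f i - ∑ i ∈ Z \ A, f i := by
        refine sub_le_sub (sum_le_sum fun i hi => ?_) (sum_le_sum fun i hi => ?_)
        · obtain ⟨hiA, hiZ⟩ := mem_sdiff.1 hi
          exact hA i hiA hiZ
        · exact hZ i (mem_sdiff.1 hi).1
    _ = ∑ i ∈ A, f i - ∑ i ∈ Z, f i := sum_sdiff_sub_sum_sdiff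

theorem stmt_1_general {S : Type*} [Fintype S] (ρu ρv : S → ℝ)
    (F : S → Bool) (μ : ℝ) (hμ : 0 < μ)
    (Z₃ : Finset S)
    (hZ₃ : Z₃ ⊆ Finset.univ.filter (fun s => ρu s = μ * ρv s))
    (Z : Finset S)
    (hZ : Z = Finset.univ.filter (fun s => ρu s < μ * ρv s) ∪ Z₃)
    (h : ∑ s ∈ Finset.univ.filter (fun s => F s = true), ρu s ≤ ∑ s ∈ Z, ρu s) :
    ∑ s ∈ Finset.univ.filter (fun s => F s = true), ρv s ≤ ∑ s ∈ Z, ρv s := by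
  have hle_on : ∀ s ∈ Z, ρu s ≤ μ * ρv s := by
    intro s hs
    rcases mem_union.1 (hZ ▸ hs) with hs | hs
    · exact (mem_filter.1 hs).2.le
    · exact (mem_filter.1 (hZ₃ hs)).2.le
  have hle_off : ∀ s ∈ univ.filter (fun s => F s = true), s ∉ Z → μ * ρv s ≤ ρu s := by
    intro s _ hs
    exact not_lt.1 fun hlt => hs (hZ ▸ mem_union_left _ (mem_filter.2 ⟨mem_univ s, hlt⟩))
  have hmul_nonpos := (mul_sum_sub_sum_le_sum_sub_sum hle_on hle_off).trans (sub_nonpos.2 h)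
  exact sub_nonpos.1 (nonpos_of_mul_nonpos_right hmul_nonpos hμ)

/-- Discrete Neyman–Pearson lemma, second direction. -/
theorem stmt_1 {S : Type*} [Fintype S] (ρu ρv : S → ℝ)
    (hu0 : ∀ s, 0 ≤ ρu s) (hv0 : ∀ s, 0 ≤ ρv s)
    (hu1 : ∑ s, ρu s = 1) (hv1 : ∑ s, ρv s = 1)
    (F : S → Bool) (μ : ℝ) (hμ : 0 < μ)
    (Z₃ : Finset S)
    (hZ₃ : Z₃ ⊆ Finset.univ.filter (fun s => ρu s = μ * ρv s))
    (Z : Finset S)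
    (hZ : Z = Finset.univ.filter (fun s => ρu s < μ * ρv s) ∪ Z₃)
    (h : ∑ s ∈ Finset.univ.filter (fun s => F s = true), ρu s ≤ ∑ s ∈ Z, ρu s) :
    ∑ s ∈ Finset.univ.filter (fun s => F s = true), ρv s ≤ ∑ s ∈ Z, ρv s :=
  stmt_1_general ρu ρv F μ hμ Z₃ hZ₃ Z hZ h
end
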